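/- arXiv:2212.08984 — 3 statements merged into one kernel-verified Lean document; each statement's English description precedes it below -/
import Mathlib

section
/- Let d, r_r, d_r^l, r_safe, d_max ≥ 0 and φ ∈ ℝ with d_r^l > r_safe + d_max + r_r. If 0 ≤ d ≤ r_r·cos(φ) + sqrt((d_r^l − r_safe − d_max)² − r_r²·sin²(φ)), then d_r^l − sqrt(d² + r_r² − 2·d·r_r·cos(φ)) ≥ r_safe + d_max. -/
/-!
Put `R = d_r^l - r_safe - d_max > r_r ≥ 0`. Completing the square,
`d² + r_r² - 2 d r_r cos φ = (d - r_r cos φ)² + r_r² sin² φ`, so the squared distance is at most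
`R²` exactly when `|d - r_r cos φ| ≤ √(R² - r_r² sin² φ)`. The upper half of this is the step bound;
the lower half holds because `d ≥ 0` and `r_r cos φ ≤ √(R² - r_r² sin² φ)`, as `r_r ≤ R`.
-/

open Real

theorem sq_add_sq_sub_two_mul_mul_cos (d r φ : ℝ) :
    d ^ 2 + r ^ 2 - 2 * d * r * cos φ = (d - r * cos φ) ^ 2 + r ^ 2 * sin φ ^ 2 := by
  linear_combination -r ^ 2 * cos_sq_add_sin_sq φ

theorem mul_cos_le_sqrt_sq_sub_sq_mul_sin_sq {r R : ℝ} (hrR : r ^ 2 ≤ R ^ 2) (φ : ℝ) :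
    r * cos φ ≤ √(R ^ 2 - r ^ 2 * sin φ ^ 2) :=
  (le_abs_self _).trans <| abs_le_sqrt <| by linear_combination hrR + r ^ 2 * sin_sq_add_cos_sq φ

theorem sq_add_sq_sub_two_mul_mul_cos_le_sq {d r R φ : ℝ} (hd : 0 ≤ d) (hrR : r ^ 2 ≤ R ^ 2)
    (hdle : d ≤ r * cos φ + √(R ^ 2 - r ^ 2 * sin φ ^ 2)) :
    d ^ 2 + r ^ 2 - 2 * d * r * cos φ ≤ R ^ 2 := by
  have hdisc : 0 ≤ R ^ 2 - r ^ 2 * sin φ ^ 2 := by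
    nlinarith [sin_sq_le_one φ, sq_nonneg r]
  have hsq : (d - r * cos φ) ^ 2 ≤ R ^ 2 - r ^ 2 * sin φ ^ 2 :=
    (Real.sq_le hdisc).2
      ⟨by linarith [mul_cos_le_sqrt_sq_sub_sq_mul_sin_sq hrR φ], by linarith⟩
  linarith [sq_add_sq_sub_two_mul_mul_cos d r φ]

theorem dyn_obstacle_step_bound_general
    (d rr drl rsafe dmax φ : ℝ)
    (hd0 : 0 ≤ d) (hrr : 0 ≤ rr)
    (hfar : rsafe + dmax + rr < drl)
    (hdle : d ≤ rr * Real.cos φ +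
      Real.sqrt ((drl - rsafe - dmax) ^ 2 - rr ^ 2 * Real.sin φ ^ 2)) :
    rsafe + dmax ≤ drl - Real.sqrt (d ^ 2 + rr ^ 2 - 2 * d * rr * Real.cos φ) := by
  have hrR : rr ^ 2 ≤ (drl - rsafe - dmax) ^ 2 := pow_le_pow_left₀ hrr (by linarith) 2
  have hdist : √(d ^ 2 + rr ^ 2 - 2 * d * rr * cos φ) ≤ drl - rsafe - dmax :=
    (sqrt_le_left (by linarith)).2 (sq_add_sq_sub_two_mul_mul_cos_le_sq hd0 hrR hdle)
  linarith

/-- Dynamic collision avoidance: if the step length d satisfies the bound of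
Eq. (15), then after moving the robot stays at least r_safe + d_max from the
virtual source of a neighboring robot. -/
theorem dyn_obstacle_step_bound
    (d rr drl rsafe dmax φ : ℝ)
    (hd0 : 0 ≤ d) (hrr : 0 ≤ rr) (hdrl : 0 ≤ drl) (hrs : 0 ≤ rsafe) (hdm : 0 ≤ dmax)
    (hfar : rsafe + dmax + rr < drl)
    (hdle : d ≤ rr * Real.cos φ +
      Real.sqrt ((drl - rsafe - dmax) ^ 2 - rr ^ 2 * Real.sin φ ^ 2)) :
    rsafe + dmax ≤ drl - Real.sqrt (d ^ 2 + rr ^ 2 - 2 * d * rr * Real.cos φ) :=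
  dyn_obstacle_step_bound_general d rr drl rsafe dmax φ hd0 hrr hfar hdle
end

section
/- For r_r > 0 and r_safe > r_r fixed, the function p ↦ (r_safe + r_r·cos(π/p) − sqrt(r_safe² + r_r² − 2·r_r·r_safe·cos(π/p)))/2, viewed as a function of x = cos(π/p) ∈ [1/2, 1), is strictly increasing, and tends to r_r as x → 1 (i.e., as p → ∞). -/
open Real Filter

/-! The linear term `r_r x` is strictly increasing while the radicand, hence its square root,
is non-increasing in `x`. At `x = 1` the radicand is `(r_safe - r_r)²`, so the bound there equals
`(r_safe + r_r - |r_safe - r_r|) / 2 = min r_r r_safe`, and continuity gives the limit. -/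

noncomputable def dMax (rr rsafe x : ℝ) : ℝ :=
  (rsafe + rr * x - √(rsafe ^ 2 + rr ^ 2 - 2 * rr * rsafe * x)) / 2

theorem dMax_strictMono {rr rsafe : ℝ} (hrr : 0 < rr) (hrs : 0 ≤ rsafe) :
    StrictMono (dMax rr rsafe) := by
  intro x y hxy
  have hlin : rr * x < rr * y := mul_lt_mul_of_pos_left hxy hrr
  have hsqrt : √(rsafe ^ 2 + rr ^ 2 - 2 * rr * rsafe * y) ≤
      √(rsafe ^ 2 + rr ^ 2 - 2 * rr * rsafe * x) :=
    Real.sqrt_le_sqrt (by nlinarith [mul_nonneg hrr.le hrs])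
  unfold dMax
  linarith

theorem continuous_dMax (rr rsafe : ℝ) : Continuous (dMax rr rsafe) := by
  unfold dMax
  fun_prop

theorem dMax_one (rr rsafe : ℝ) : dMax rr rsafe 1 = min rr rsafe := by
  have hsq : rsafe ^ 2 + rr ^ 2 - 2 * rr * rsafe * 1 = (rsafe - rr) ^ 2 := by ring
  rw [dMax, hsq, Real.sqrt_sq_eq_abs, inf_eq_half_smul_add_sub_abs_sub' ℝ, smul_eq_mul]
  ring

/-- As a function of x = cos(π/p) ∈ [1/2, 1), the step-size bound
x ↦ (r_safe + r_r·x − √(r_safe² + r_r² − 2 r_r r_safe x))/2 is strictly increasing,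
and tends to r_r as x → 1 (i.e. as p → ∞). -/
theorem dmax_strictMono_and_limit (rr rsafe : ℝ) (hrr : 0 < rr) (hrs : rr < rsafe) :
    StrictMonoOn
      (fun x : ℝ => (rsafe + rr * x -
        Real.sqrt (rsafe ^ 2 + rr ^ 2 - 2 * rr * rsafe * x)) / 2)
      (Set.Ico (1/2 : ℝ) 1) ∧
    Tendsto
      (fun x : ℝ => (rsafe + rr * x -
        Real.sqrt (rsafe ^ 2 + rr ^ 2 - 2 * rr * rsafe * x)) / 2)
      (nhdsWithin 1 (Set.Iio 1)) (nhds rr) := by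
  refine ⟨(dMax_strictMono hrr (hrr.trans hrs).le).strictMonoOn _, ?_⟩
  have hlim :=
    ((continuous_dMax rr rsafe).tendsto 1).mono_left (nhdsWithin_le_nhds (s := Set.Iio 1))
  rwa [dMax_one, min_eq_left hrs.le] at hlim
end

section
/- If the true direction angle φ of an obstacle relative to the robot center lies within ±π/p of sensor k's direction φ^k, and the motion direction θ lies in the avoidance range [φ^k + π/p + π/2, φ^k − π/p + 3π/2] (mod 2π), then cos(θ − φ) ≤ 0, and hence by the static-obstacle inequality the robot does not decrease its distance to the obstacle. -/
open Real

theorem cos_sub_nonpos_of_abs_le {a b c : ℝ} (ha : |a| ≤ c)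
    (hb1 : π / 2 + c ≤ b) (hb2 : b ≤ 3 * π / 2 - c) : cos (b - a) ≤ 0 := by
  obtain ⟨ha_lower, ha_upper⟩ := abs_le.1 ha
  exact cos_nonpos_of_pi_div_two_le_of_le (by linarith) (by linarith)

/-- With `c = cos (θ - φ)`, the law of cosines turns this into: moving by `d` in direction `θ`
does not bring the robot closer to an obstacle at distance `D` in direction `φ`. -/
theorem sq_sub_two_mul_mul_mul_nonneg {d D c : ℝ} (hd : 0 ≤ d) (hD : 0 ≤ D) (hc : c ≤ 0) :
    0 ≤ d ^ 2 - 2 * d * D * c := by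
  nlinarith [mul_nonneg (mul_nonneg hd hD) (neg_nonneg.2 hc), sq_nonneg d]

theorem avoidance_range_cos_nonpos_general
    (p : ℕ) (φ φk θ a b : ℝ)
    (ha : φ = φk + a) (haa : |a| ≤ Real.pi / p)
    (hb : θ = φk + b)
    (hb1 : Real.pi / 2 + Real.pi / p ≤ b) (hb2 : b ≤ 3 * Real.pi / 2 - Real.pi / p) :
    Real.cos (θ - φ) ≤ 0 ∧
    ∀ d D : ℝ, 0 ≤ d → 0 ≤ D → 0 ≤ d ^ 2 - 2 * d * D * Real.cos (θ - φ) := by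
  have hcos : cos (θ - φ) ≤ 0 := by
    rw [ha, hb, add_sub_add_left_eq_sub]
    exact cos_sub_nonpos_of_abs_le haa hb1 hb2
  exact ⟨hcos, fun d D hd hD => sq_sub_two_mul_mul_mul_nonneg hd hD hcos⟩

/-- Avoidance range: if the obstacle direction is φ = φ^k + a with |a| ≤ π/p and the
motion direction is θ = φ^k + b with b in the avoidance range
[π/2 + π/p, 3π/2 − π/p] (the range Θ_s^avo of Eq. (13) taken mod 2π), then
cos(θ − φ) ≤ 0, and hence d² − 2·d·D·cos(θ − φ) ≥ 0 for all d, D ≥ 0: the robot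
does not decrease its distance to the obstacle. -/
theorem avoidance_range_cos_nonpos
    (p : ℕ) (hp : 3 ≤ p) (φ φk θ a b : ℝ)
    (ha : φ = φk + a) (haa : |a| ≤ Real.pi / p)
    (hb : θ = φk + b)
    (hb1 : Real.pi / 2 + Real.pi / p ≤ b) (hb2 : b ≤ 3 * Real.pi / 2 - Real.pi / p) :
    Real.cos (θ - φ) ≤ 0 ∧
    ∀ d D : ℝ, 0 ≤ d → 0 ≤ D → 0 ≤ d ^ 2 - 2 * d * D * Real.cos (θ - φ) :=
  avoidance_range_cos_nonpos_general p φ φk θ a b ha haa hb hb1 hb2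
end
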